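/- Let (X,d) be a compact metric space and f_n: X → X continuous for each n ≥ 0. Assume the non-autonomous system x_{n+1} = f_n(x_n) has two periodic points x and y whose orbits do not intersect (so there is δ > 0 with d(f_0^n(x), f_0^n(y)) > 2δ for all n ≥ 0). If the system has the asymptotic average shadowing property, then it has an uncountable distributionally δ-scrambled set; i.e., it is distributionally δ-chaotic. -/

import Mathlib

open Filter Metric Set
open scoped Classical

/-- Trajectory of the non-autonomous system: `orb f n = f_{n-1} ∘ ⋯ ∘ f_0`, `orb f 0 = id`. -/
def orb {X : Type*} (f : ℕ → X → X) : ℕ → X → X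
  | 0 => id
  | n + 1 => fun x => f n (orb f n x)

/-- Cesàro average of the indicator of `dist (f_0^{p i} x) (f_0^{p i} y) < ε` over `i < n`. -/
noncomputable def distAvg {X : Type*} [MetricSpace X] (f : ℕ → X → X) (p : ℕ → ℕ)
    (x y : X) (ε : ℝ) (n : ℕ) : ℝ :=
  (∑ i ∈ Finset.range n, if dist (orb f (p i) x) (orb f (p i) y) < ε then (1 : ℝ) else 0) / n

namespace Stmt11Aux

lemma not_countable_nat_bool : ¬ Countable (ℕ → Bool) := by
  intro h
  have h2 : Countable (Set ℕ) :=
    Countable.of_equiv _ ((Equiv.refl ℕ).arrowCongr Equiv.propEquivBool.symm)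
  obtain ⟨g, hg⟩ := Countable.exists_injective_nat (Set ℕ)
  exact Function.cantor_injective g hg

/-- Block index: the largest `k` with `k ! ≤ i`. -/
def blk (i : ℕ) : ℕ := Nat.findGreatest (fun k => Nat.factorial k ≤ i) i

lemma blk_mono : Monotone blk := fun _ b hab =>
  Nat.findGreatest_mono (fun _ hk => hk.trans hab) hab

lemma blk_zero : blk 0 = 0 := rfl

lemma blk_fact_le {i : ℕ} (h : 1 ≤ blk i) : Nat.factorial (blk i) ≤ i := by
  have h1 : 1 ≤ i := le_trans h (Nat.findGreatest_le i)
  exact Nat.findGreatest_spec (P := fun k => Nat.factorial k ≤ i) (m := 1) h1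
    (by simpa using h1)

lemma le_blk {K i : ℕ} (h : Nat.factorial K ≤ i) : K ≤ blk i :=
  Nat.le_findGreatest (le_trans (Nat.self_le_factorial K) h) h

lemma blk_eq {K i : ℕ} (hK : 1 ≤ K) (h1 : Nat.factorial K ≤ i)
    (h2 : i < Nat.factorial (K + 1)) : blk i = K := by
  have hle := le_blk h1
  rcases lt_or_ge (blk i) (K + 1) with h | h
  · omega
  · exfalso
    have h1b : 1 ≤ blk i := le_trans hK hle
    have hbf := blk_fact_le h1b
    have hff : Nat.factorial (K + 1) ≤ Nat.factorial (blk i) := Nat.factorial_le h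
    omega

lemma blk_tendsto : Tendsto blk atTop atTop := by
  rw [tendsto_atTop_atTop]
  intro K
  exact ⟨Nat.factorial K, fun n hn => le_blk hn⟩

lemma blk_div_tendsto : Tendsto (fun n => (blk n : ℝ) / n) atTop (nhds 0) := by
  apply squeeze_zero' (g := fun n => ((blk n : ℝ) - 1)⁻¹)
  · filter_upwards [eventually_ge_atTop 1] with n hn
    have : (0:ℝ) < n := by exact_mod_cast hn
    positivity
  · have h2 : ∀ᶠ n in atTop, 2 ≤ blk n := blk_tendsto.eventually (eventually_ge_atTop 2)
    filter_upwards [h2, eventually_ge_atTop 1] with n h2n h1n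
    have hfact : Nat.factorial (blk n) ≤ n := blk_fact_le (by omega)
    have hk : (2:ℝ) ≤ (blk n : ℝ) := by exact_mod_cast h2n
    have hnn : (0:ℝ) < n := by exact_mod_cast h1n
    have keyN : blk n * (blk n - 1) ≤ n := by
      have hmf : blk n * Nat.factorial (blk n - 1) = Nat.factorial (blk n) :=
        Nat.mul_factorial_pred (by omega)
      have h1 : blk n * (blk n - 1) ≤ blk n * Nat.factorial (blk n - 1) :=
        Nat.mul_le_mul_left _ (Nat.self_le_factorial _)
      omega
    have key : (blk n : ℝ) * ((blk n : ℝ) - 1) ≤ n := by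
      have hc : ((blk n * (blk n - 1) : ℕ) : ℝ) ≤ (n : ℝ) := by exact_mod_cast keyN
      rwa [Nat.cast_mul, Nat.cast_sub (by omega), Nat.cast_one] at hc
    rw [inv_eq_one_div, div_le_div_iff₀ hnn (by linarith)]
    linarith
  · have h1 : Tendsto (fun n => (blk n : ℝ)) atTop atTop :=
      tendsto_natCast_atTop_atTop.comp blk_tendsto
    have h2 : Tendsto (fun n => (blk n : ℝ) - 1) atTop atTop := by
      simpa [sub_eq_add_neg] using tendsto_atTop_add_const_right atTop (-1 : ℝ) h1
    exact tendsto_inv_atTop_zero.comp h2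

lemma sum_ind_ge (m n : ℕ) (h : m ≤ n) :
    (∑ i ∈ Finset.range n, if m ≤ i then (1:ℝ) else 0) = (n:ℝ) - m := by
  rw [Finset.sum_boole]
  have he : (Finset.range n).filter (fun i => m ≤ i) = Finset.Ico m n := by
    ext i
    simp only [Finset.mem_filter, Finset.mem_range, Finset.mem_Ico]
    omega
  rw [he, Nat.card_Ico, Nat.cast_sub h]

lemma sum_ind_lt (m n : ℕ) (h : m ≤ n) :
    (∑ i ∈ Finset.range n, if i < m then (1:ℝ) else 0) = (m:ℝ) := by
  rw [Finset.sum_boole]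
  have he : (Finset.range n).filter (fun i => i < m) = Finset.range m := by
    ext i
    simp only [Finset.mem_filter, Finset.mem_range]
    omega
  rw [he, Finset.card_range]

lemma avg_ind_tendsto_zero (d : ℕ → ℝ) (hd : ∀ i, 0 ≤ d i) {η : ℝ} (hη : 0 < η)
    (h : Tendsto (fun n => (∑ i ∈ Finset.range n, d i) / n) atTop (nhds 0)) :
    Tendsto (fun n => (∑ i ∈ Finset.range n, if η ≤ d i then (1:ℝ) else 0) / n)
      atTop (nhds 0) := by
  have hnn : ∀ n : ℕ, 0 ≤ (∑ i ∈ Finset.range n, if η ≤ d i then (1:ℝ) else 0) / n := by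
    intro n
    apply div_nonneg _ (Nat.cast_nonneg n)
    apply Finset.sum_nonneg
    intro i _
    split <;> norm_num
  apply squeeze_zero hnn (g := fun n => η⁻¹ * ((∑ i ∈ Finset.range n, d i) / n))
  · intro n
    have hsum : (∑ i ∈ Finset.range n, if η ≤ d i then (1:ℝ) else 0)
        ≤ (∑ i ∈ Finset.range n, d i) / η := by
      rw [Finset.sum_div]
      apply Finset.sum_le_sum
      intro i _
      by_cases hi : η ≤ d i
      · rw [if_pos hi, le_div_iff₀ hη]
        linarith
      · rw [if_neg hi]
        exact div_nonneg (hd i) hη.le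
    calc (∑ i ∈ Finset.range n, if η ≤ d i then (1:ℝ) else 0) / n
        ≤ ((∑ i ∈ Finset.range n, d i) / η) / n :=
          div_le_div_of_nonneg_right hsum (Nat.cast_nonneg n)
      _ = η⁻¹ * ((∑ i ∈ Finset.range n, d i) / n) := by
          ring
  · simpa using h.const_mul η⁻¹

lemma fact_div_fact_succ (K : ℕ) :
    ((Nat.factorial K : ℝ)) / (Nat.factorial (K + 1)) = 1 / ((K : ℝ) + 1) := by
  rw [Nat.factorial_succ]
  have h1 : (Nat.factorial K : ℝ) ≠ 0 := by
    exact_mod_cast (Nat.factorial_pos K).ne'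
  have h2 : ((K : ℝ) + 1) ≠ 0 := by positivity
  push_cast
  field_simp

end Stmt11Aux

open Stmt11Aux in
theorem stmt11 {X : Type*} [MetricSpace X] [CompactSpace X]
    (f : ℕ → X → X) (hf : ∀ n, Continuous (f n))
    (x y : X) (δ : ℝ) (hδ : 0 < δ)
    (hsep : ∀ n : ℕ, 2 * δ < dist (orb f n x) (orb f n y))
    (haasp : ∀ z : ℕ → X,
      Tendsto (fun n => (∑ i ∈ Finset.range n, dist (f i (z i)) (z (i + 1))) / n)
        atTop (nhds 0) →
      ∃ w : X, Tendsto (fun n => (∑ i ∈ Finset.range n, dist (orb f i w) (z i)) / n)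
        atTop (nhds 0)) :
    ∃ D : Set X, ¬ D.Countable ∧ ∀ u ∈ D, ∀ v ∈ D, u ≠ v →
      (∀ ε > 0, limsup (distAvg f id u v ε) atTop = 1) ∧
      liminf (distAvg f id u v δ) atTop = 0 := by
  classical
  -- a uniform bound on distances
  obtain ⟨C, hC⟩ : ∃ C : ℝ, ∀ a b : X, dist a b ≤ C := by
    obtain ⟨C, hC⟩ := Metric.isBounded_iff.mp (isCompact_univ (X := X)).isBounded
    exact ⟨C, fun a b => hC (mem_univ a) (mem_univ b)⟩
  have hC0 : 0 ≤ C := le_trans dist_nonneg (hC x x)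
  -- the pseudo-orbits
  set z : (ℕ → Bool) → ℕ → X :=
    fun α i => if α (blk i) then orb f i y else orb f i x with hzdef
  have hzval : ∀ (α : ℕ → Bool) (K i : ℕ), 1 ≤ K → Nat.factorial K ≤ i →
      i < Nat.factorial (K + 1) →
      z α i = if α K then orb f i y else orb f i x := by
    intro α K i hK h1 h2
    simp only [hzdef]
    rw [blk_eq hK h1 h2]
  -- each pseudo-orbit is an asymptotic average pseudo-orbit
  have hz : ∀ α : ℕ → Bool,
      Tendsto (fun n => (∑ i ∈ Finset.range n, dist (f i (z α i)) (z α (i + 1))) / n)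
        atTop (nhds 0) := by
    intro α
    apply squeeze_zero (g := fun n => C * ((blk n : ℝ) / n))
    · intro n
      exact div_nonneg (Finset.sum_nonneg fun i _ => dist_nonneg) (Nat.cast_nonneg n)
    · intro n
      have hterm : ∀ i, dist (f i (z α i)) (z α (i + 1))
          ≤ C * ((blk (i + 1) : ℝ) - blk i) := by
        intro i
        by_cases hb : blk (i + 1) = blk i
        · have heq : f i (z α i) = z α (i + 1) := by
            simp only [hzdef, hb]
            by_cases hα : α (blk i) <;> simp [hα, orb]
          rw [heq, hb]
          simp
        · have h1 : blk i < blk (i + 1) := lt_of_le_of_ne (blk_mono (Nat.le_succ i)) (Ne.symm hb)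
          have h2 : (1:ℝ) ≤ (blk (i + 1) : ℝ) - blk i := by
            have : (blk i : ℝ) + 1 ≤ blk (i + 1) := by exact_mod_cast h1
            linarith
          calc dist (f i (z α i)) (z α (i + 1)) ≤ C := hC _ _
            _ ≤ C * ((blk (i + 1) : ℝ) - blk i) := by nlinarith
      calc (∑ i ∈ Finset.range n, dist (f i (z α i)) (z α (i + 1))) / n
          ≤ (∑ i ∈ Finset.range n, C * ((blk (i + 1) : ℝ) - blk i)) / n :=
            div_le_div_of_nonneg_right (Finset.sum_le_sum fun i _ => hterm i)
              (Nat.cast_nonneg n)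
        _ = C * ((blk n : ℝ) / n) := by
            rw [← Finset.mul_sum, Finset.sum_range_sub (fun i => (blk i : ℝ))]
            rw [blk_zero]
            push_cast
            ring
    · simpa using blk_div_tendsto.const_mul C
  -- the shadowing points
  choose W hW using fun α => haasp (z α) (hz α)
  -- encoding of 0-1 sequences
  set e : (ℕ → Bool) → ℕ → Bool :=
    fun s k => if k % 2 = 1 then s (Nat.unpair (k / 2)).1 else false with hedef
  have he_even : ∀ (s : ℕ → Bool) (j : ℕ), e s (2 * j) = false := by
    intro s j
    have h : (2 * j) % 2 = 0 := by omega
    simp [hedef, h]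
  have he_odd : ∀ (s : ℕ → Bool) (m : ℕ), e s (2 * m + 1) = s (Nat.unpair m).1 := by
    intro s m
    have h1 : (2 * m + 1) % 2 = 1 := by omega
    have h2 : (2 * m + 1) / 2 = m := by omega
    simp [hedef, h1, h2]
  -- elementary bounds on distAvg
  have hAvg0 : ∀ (u v : X) (ε : ℝ) (n : ℕ), 0 ≤ distAvg f id u v ε n := by
    intro u v ε n
    apply div_nonneg _ (Nat.cast_nonneg n)
    apply Finset.sum_nonneg
    intro i _
    split <;> norm_num
  have hAvg1 : ∀ (u v : X) (ε : ℝ) (n : ℕ), distAvg f id u v ε n ≤ 1 := by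
    intro u v ε n
    rcases Nat.eq_zero_or_pos n with rfl | hn
    · simp [distAvg]
    have hn' : (0:ℝ) < n := by exact_mod_cast hn
    rw [distAvg, div_le_one hn']
    calc (∑ i ∈ Finset.range n,
          if dist (orb f (id i) u) (orb f (id i) v) < ε then (1:ℝ) else 0)
        ≤ ∑ _i ∈ Finset.range n, (1:ℝ) := by
          apply Finset.sum_le_sum
          intro i _
          split <;> norm_num
      _ = n := by simp
  -- the key scrambling estimate for pairs of distinct parameters
  have key : ∀ s t : ℕ → Bool, s ≠ t →
      (∀ ε > 0, limsup (distAvg f id (W (e s)) (W (e t)) ε) atTop = 1) ∧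
      liminf (distAvg f id (W (e s)) (W (e t)) δ) atTop = 0 := by
    intro s t hst
    have hwa := hW (e s)
    have hwb := hW (e t)
    have hSa : ∀ η : ℝ, 0 < η → Tendsto (fun n =>
        (∑ i ∈ Finset.range n,
          if η ≤ dist (orb f i (W (e s))) (z (e s) i) then (1:ℝ) else 0) / n)
        atTop (nhds 0) :=
      fun η hη => avg_ind_tendsto_zero _ (fun i => dist_nonneg) hη hwa
    have hSb : ∀ η : ℝ, 0 < η → Tendsto (fun n =>
        (∑ i ∈ Finset.range n,
          if η ≤ dist (orb f i (W (e t))) (z (e t) i) then (1:ℝ) else 0) / n)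
        atTop (nhds 0) :=
      fun η hη => avg_ind_tendsto_zero _ (fun i => dist_nonneg) hη hwb
    constructor
    · -- limsup = 1
      intro ε hε
      have hbddA : IsBoundedUnder (· ≤ ·) atTop (distAvg f id (W (e s)) (W (e t)) ε) :=
        isBoundedUnder_of ⟨1, fun n => hAvg1 _ _ _ n⟩
      have hbddB : IsBoundedUnder (· ≥ ·) atTop (distAvg f id (W (e s)) (W (e t)) ε) :=
        isBoundedUnder_of ⟨0, fun n => hAvg0 _ _ _ n⟩
      apply le_antisymm
      · exact limsup_le_of_le hbddB.isCoboundedUnder_le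
          (Eventually.of_forall fun n => hAvg1 _ _ _ n)
      · apply le_of_forall_sub_le
        intro c hc
        apply le_limsup_of_frequently_le _ hbddA
        -- frequently along n = (2j+3)!
        set φ : ℕ → ℕ := fun j => Nat.factorial (2 * j + 3) with hφdef
        have hφ : Tendsto φ atTop atTop := by
          apply tendsto_atTop_mono (fun j => ?_) tendsto_id
          calc id j ≤ 2 * j + 3 := by simp; omega
            _ ≤ Nat.factorial (2 * j + 3) := Nat.self_le_factorial _
        -- the core lower bound at n = (K+1)! with K = 2j+2
        have hcore : ∀ j : ℕ,
            1 - 1 / ((2 * (j:ℝ) + 2) + 1)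
              - (∑ i ∈ Finset.range (φ j),
                  if ε / 2 ≤ dist (orb f i (W (e s))) (z (e s) i) then (1:ℝ) else 0) / φ j
              - (∑ i ∈ Finset.range (φ j),
                  if ε / 2 ≤ dist (orb f i (W (e t))) (z (e t) i) then (1:ℝ) else 0) / φ j
            ≤ distAvg f id (W (e s)) (W (e t)) ε (φ j) := by
          intro j
          set K : ℕ := 2 * j + 2 with hKdef
          have hφK : φ j = Nat.factorial (K + 1) := by rw [hφdef, hKdef]
          have hKn : Nat.factorial K ≤ φ j := by
            rw [hφK]; exact Nat.factorial_le (by omega)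
          have heK : e s K = e t K := by
            have h1 := he_even s (j + 1)
            have h2 := he_even t (j + 1)
            have : 2 * (j + 1) = K := by omega
            rw [this] at h1 h2
            rw [h1, h2]
          have hnpos : (0:ℝ) < (φ j : ℝ) := by
            have := Nat.factorial_pos (K + 1)
            rw [hφK]; exact_mod_cast this
          -- pointwise estimate
          have hpt : ∀ i ∈ Finset.range (φ j),
              (if Nat.factorial K ≤ i then (1:ℝ) else 0)
                - (if ε / 2 ≤ dist (orb f i (W (e s))) (z (e s) i) then (1:ℝ) else 0)
                - (if ε / 2 ≤ dist (orb f i (W (e t))) (z (e t) i) then (1:ℝ) else 0)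
              ≤ (if dist (orb f (id i) (W (e s))) (orb f (id i) (W (e t))) < ε
                  then (1:ℝ) else 0) := by
            intro i hi
            simp only [id_eq]
            by_cases h1 : Nat.factorial K ≤ i
            · by_cases h2 : ε / 2 ≤ dist (orb f i (W (e s))) (z (e s) i)
              · have hR : (0:ℝ) ≤ if dist (orb f i (W (e s))) (orb f i (W (e t))) < ε
                    then (1:ℝ) else 0 := by split <;> norm_num
                split_ifs <;> linarith
              · by_cases h3 : ε / 2 ≤ dist (orb f i (W (e t))) (z (e t) i)
                · have hR : (0:ℝ) ≤ if dist (orb f i (W (e s))) (orb f i (W (e t))) < ε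
                      then (1:ℝ) else 0 := by split <;> norm_num
                  split_ifs <;> linarith
                · -- good case
                  have hiK : i < Nat.factorial (K + 1) := by
                    rw [← hφK]; exact Finset.mem_range.mp hi
                  have hzs := hzval (e s) K i (by omega) h1 hiK
                  have hzt := hzval (e t) K i (by omega) h1 hiK
                  have hzz : z (e s) i = z (e t) i := by rw [hzs, hzt, heK]
                  have hd : dist (orb f i (W (e s))) (orb f i (W (e t))) < ε := by
                    calc dist (orb f i (W (e s))) (orb f i (W (e t)))
                        ≤ dist (orb f i (W (e s))) (z (e s) i)
                          + dist (z (e s) i) (z (e t) i)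
                          + dist (z (e t) i) (orb f i (W (e t))) := dist_triangle4 _ _ _ _
                      _ = dist (orb f i (W (e s))) (z (e s) i)
                          + dist (orb f i (W (e t))) (z (e t) i) := by
                          rw [hzz, dist_self, dist_comm (z (e t) i)]
                          ring
                      _ < ε := by push_neg at h2 h3; linarith
                  rw [if_pos h1, if_neg h2, if_neg h3, if_pos hd]
                  norm_num
            · have hR : (0:ℝ) ≤ if dist (orb f i (W (e s))) (orb f i (W (e t))) < ε
                  then (1:ℝ) else 0 := by split <;> norm_num
              split_ifs <;> linarith
          have hsum := Finset.sum_le_sum hpt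
          rw [Finset.sum_sub_distrib, Finset.sum_sub_distrib,
            sum_ind_ge (Nat.factorial K) (φ j) hKn] at hsum
          -- divide by n
          have hdiv : (((φ j : ℝ) - Nat.factorial K)
                - (∑ i ∈ Finset.range (φ j),
                    if ε / 2 ≤ dist (orb f i (W (e s))) (z (e s) i) then (1:ℝ) else 0)
                - (∑ i ∈ Finset.range (φ j),
                    if ε / 2 ≤ dist (orb f i (W (e t))) (z (e t) i) then (1:ℝ) else 0)) / φ j
              ≤ distAvg f id (W (e s)) (W (e t)) ε (φ j) := by
            rw [distAvg]
            exact div_le_div_of_nonneg_right hsum hnpos.le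
          have hfrac : ((Nat.factorial K : ℝ)) / (φ j : ℝ) = 1 / ((2 * (j:ℝ) + 2) + 1) := by
            rw [hφK, fact_div_fact_succ K, hKdef]
            push_cast
            ring_nf
          calc 1 - 1 / ((2 * (j:ℝ) + 2) + 1)
                - (∑ i ∈ Finset.range (φ j),
                    if ε / 2 ≤ dist (orb f i (W (e s))) (z (e s) i) then (1:ℝ) else 0) / φ j
                - (∑ i ∈ Finset.range (φ j),
                    if ε / 2 ≤ dist (orb f i (W (e t))) (z (e t) i) then (1:ℝ) else 0) / φ j
              = (((φ j : ℝ) - Nat.factorial K)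
                - (∑ i ∈ Finset.range (φ j),
                    if ε / 2 ≤ dist (orb f i (W (e s))) (z (e s) i) then (1:ℝ) else 0)
                - (∑ i ∈ Finset.range (φ j),
                    if ε / 2 ≤ dist (orb f i (W (e t))) (z (e t) i) then (1:ℝ) else 0)) / φ j := by
                rw [sub_div, sub_div, sub_div, div_self hnpos.ne', hfrac]
            _ ≤ _ := hdiv
        -- eventual smallness along the subsequence
        have hta : Tendsto (fun j => (∑ i ∈ Finset.range (φ j),
            if ε / 2 ≤ dist (orb f i (W (e s))) (z (e s) i) then (1:ℝ) else 0) / φ j)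
            atTop (nhds 0) := (hSa (ε / 2) (by positivity)).comp hφ
        have htb : Tendsto (fun j => (∑ i ∈ Finset.range (φ j),
            if ε / 2 ≤ dist (orb f i (W (e t))) (z (e t) i) then (1:ℝ) else 0) / φ j)
            atTop (nhds 0) := (hSb (ε / 2) (by positivity)).comp hφ
        have htc : Tendsto (fun j : ℕ => 1 / ((2 * (j:ℝ) + 2) + 1)) atTop (nhds 0) := by
          have h1 : Tendsto (fun j : ℕ => (2 * (j:ℝ) + 2) + 1) atTop atTop := by
            apply tendsto_atTop_add_const_right
            apply tendsto_atTop_add_const_right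
            exact Tendsto.const_mul_atTop (by norm_num) (tendsto_natCast_atTop_atTop (R := ℝ))
          simpa [one_div, Function.comp_def] using tendsto_inv_atTop_zero.comp h1
        have hev : ∀ᶠ j in atTop,
            1 - c ≤ distAvg f id (W (e s)) (W (e t)) ε (φ j) := by
          filter_upwards [hta.eventually_lt_const (show (0:ℝ) < c / 3 by linarith),
            htb.eventually_lt_const (show (0:ℝ) < c / 3 by linarith),
            htc.eventually_lt_const (show (0:ℝ) < c / 3 by linarith)] with j h1 h2 h3
          have := hcore j
          linarith
        exact hφ.frequently hev.frequently
    · -- liminf = 0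
      have hbddA : IsBoundedUnder (· ≤ ·) atTop (distAvg f id (W (e s)) (W (e t)) δ) :=
        isBoundedUnder_of ⟨1, fun n => hAvg1 _ _ _ n⟩
      have hbddB : IsBoundedUnder (· ≥ ·) atTop (distAvg f id (W (e s)) (W (e t)) δ) :=
        isBoundedUnder_of ⟨0, fun n => hAvg0 _ _ _ n⟩
      apply le_antisymm
      · -- liminf ≤ 0
        obtain ⟨a0, ha0⟩ := Function.ne_iff.mp hst
        set K : ℕ → ℕ := fun m => 2 * Nat.pair a0 m + 1 with hKdef
        set ψ : ℕ → ℕ := fun m => Nat.factorial (K m + 1) with hψdef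
        have hψ : Tendsto ψ atTop atTop := by
          apply tendsto_atTop_mono (fun m => ?_) tendsto_id
          calc id m ≤ K m + 1 := by
                simp only [hKdef, id_eq]
                have := Nat.right_le_pair a0 m
                omega
            _ ≤ Nat.factorial (K m + 1) := Nat.self_le_factorial _
        have hKne : ∀ m, e s (K m) ≠ e t (K m) := by
          intro m
          simp only [hKdef]
          rw [he_odd, he_odd, Nat.unpair_pair]
          exact ha0
        have hcore : ∀ m : ℕ,
            distAvg f id (W (e s)) (W (e t)) δ (ψ m)
              ≤ 1 / ((K m : ℝ) + 1)
                + (∑ i ∈ Finset.range (ψ m),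
                    if δ / 2 ≤ dist (orb f i (W (e s))) (z (e s) i) then (1:ℝ) else 0) / ψ m
                + (∑ i ∈ Finset.range (ψ m),
                    if δ / 2 ≤ dist (orb f i (W (e t))) (z (e t) i) then (1:ℝ) else 0) / ψ m := by
          intro m
          have hψK : ψ m = Nat.factorial (K m + 1) := rfl
          have hKn : Nat.factorial (K m) ≤ ψ m := by
            rw [hψK]; exact Nat.factorial_le (by omega)
          have hnpos : (0:ℝ) < (ψ m : ℝ) := by
            have := Nat.factorial_pos (K m + 1)
            rw [hψK]; exact_mod_cast this
          have hpt : ∀ i ∈ Finset.range (ψ m),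
              (if dist (orb f (id i) (W (e s))) (orb f (id i) (W (e t))) < δ
                  then (1:ℝ) else 0)
              ≤ (if i < Nat.factorial (K m) then (1:ℝ) else 0)
                + (if δ / 2 ≤ dist (orb f i (W (e s))) (z (e s) i) then (1:ℝ) else 0)
                + (if δ / 2 ≤ dist (orb f i (W (e t))) (z (e t) i) then (1:ℝ) else 0) := by
            intro i hi
            simp only [id_eq]
            by_cases h1 : i < Nat.factorial (K m)
            · have hL : (if dist (orb f i (W (e s))) (orb f i (W (e t))) < δ
                  then (1:ℝ) else 0) ≤ 1 := by split <;> norm_num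
              rw [if_pos h1]
              have h2 : (0:ℝ) ≤ if δ / 2 ≤ dist (orb f i (W (e s))) (z (e s) i)
                  then (1:ℝ) else 0 := by split <;> norm_num
              have h3 : (0:ℝ) ≤ if δ / 2 ≤ dist (orb f i (W (e t))) (z (e t) i)
                  then (1:ℝ) else 0 := by split <;> norm_num
              linarith
            · by_cases h2 : δ / 2 ≤ dist (orb f i (W (e s))) (z (e s) i)
              · have hL : (if dist (orb f i (W (e s))) (orb f i (W (e t))) < δ
                    then (1:ℝ) else 0) ≤ 1 := by split <;> norm_num
                rw [if_neg h1, if_pos h2]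
                have h3 : (0:ℝ) ≤ if δ / 2 ≤ dist (orb f i (W (e t))) (z (e t) i)
                    then (1:ℝ) else 0 := by split <;> norm_num
                linarith
              · by_cases h3 : δ / 2 ≤ dist (orb f i (W (e t))) (z (e t) i)
                · have hL : (if dist (orb f i (W (e s))) (orb f i (W (e t))) < δ
                      then (1:ℝ) else 0) ≤ 1 := by split <;> norm_num
                  rw [if_neg h1, if_neg h2, if_pos h3]
                  linarith
                · -- good case : large distance
                  push_neg at h1 h2 h3
                  have hiK : i < Nat.factorial (K m + 1) := by
                    rw [← hψK]; exact Finset.mem_range.mp hi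
                  have hKm1 : 1 ≤ K m := by simp only [hKdef]; omega
                  have hzs := hzval (e s) (K m) i hKm1 h1 hiK
                  have hzt := hzval (e t) (K m) i hKm1 h1 hiK
                  have hzz : 2 * δ < dist (z (e s) i) (z (e t) i) := by
                    rw [hzs, hzt]
                    rcases Bool.eq_false_or_eq_true (e s (K m)) with hes | hes <;>
                      rcases Bool.eq_false_or_eq_true (e t (K m)) with het | het
                    · exact absurd (hes.trans het.symm) (hKne m)
                    · simp only [hes, het, if_true, if_false]
                      rw [dist_comm]
                      exact hsep i
                    · simp only [hes, het, if_true, if_false]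
                      exact hsep i
                    · exact absurd (hes.trans het.symm) (hKne m)
                  have hd : ¬ dist (orb f i (W (e s))) (orb f i (W (e t))) < δ := by
                    push_neg
                    have htri : dist (z (e s) i) (z (e t) i)
                        ≤ dist (z (e s) i) (orb f i (W (e s)))
                          + dist (orb f i (W (e s))) (orb f i (W (e t)))
                          + dist (orb f i (W (e t))) (z (e t) i) := dist_triangle4 _ _ _ _
                    rw [dist_comm (z (e s) i) (orb f i (W (e s)))] at htri
                    have h3' : dist (orb f i (W (e t))) (z (e t) i) < δ / 2 := h3
                    linarith
                  rw [if_neg hd, if_neg (not_lt.mpr h1), if_neg (not_le.mpr h2), if_neg (not_le.mpr h3)]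
                  norm_num
          have hsum := Finset.sum_le_sum hpt
          rw [Finset.sum_add_distrib, Finset.sum_add_distrib,
            sum_ind_lt (Nat.factorial (K m)) (ψ m) hKn] at hsum
          have hfrac : ((Nat.factorial (K m) : ℝ)) / (ψ m : ℝ) = 1 / ((K m : ℝ) + 1) := by
            rw [hψK, fact_div_fact_succ (K m)]
          calc distAvg f id (W (e s)) (W (e t)) δ (ψ m)
              ≤ ((Nat.factorial (K m) : ℝ)
                + (∑ i ∈ Finset.range (ψ m),
                    if δ / 2 ≤ dist (orb f i (W (e s))) (z (e s) i) then (1:ℝ) else 0)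
                + (∑ i ∈ Finset.range (ψ m),
                    if δ / 2 ≤ dist (orb f i (W (e t))) (z (e t) i) then (1:ℝ) else 0)) / ψ m := by
                rw [distAvg]
                exact div_le_div_of_nonneg_right hsum hnpos.le
            _ = 1 / ((K m : ℝ) + 1)
                + (∑ i ∈ Finset.range (ψ m),
                    if δ / 2 ≤ dist (orb f i (W (e s))) (z (e s) i) then (1:ℝ) else 0) / ψ m
                + (∑ i ∈ Finset.range (ψ m),
                    if δ / 2 ≤ dist (orb f i (W (e t))) (z (e t) i) then (1:ℝ) else 0) / ψ m := by
                rw [add_div, add_div, hfrac]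
        -- conclude liminf ≤ 0
        by_contra hpos
        push_neg at hpos
        set L := liminf (distAvg f id (W (e s)) (W (e t)) δ) atTop with hLdef
        have hL3 : (0:ℝ) < L / 3 := by linarith
        have hta : Tendsto (fun m => (∑ i ∈ Finset.range (ψ m),
            if δ / 2 ≤ dist (orb f i (W (e s))) (z (e s) i) then (1:ℝ) else 0) / ψ m)
            atTop (nhds 0) := (hSa (δ / 2) (by positivity)).comp hψ
        have htb : Tendsto (fun m => (∑ i ∈ Finset.range (ψ m),
            if δ / 2 ≤ dist (orb f i (W (e t))) (z (e t) i) then (1:ℝ) else 0) / ψ m)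
            atTop (nhds 0) := (hSb (δ / 2) (by positivity)).comp hψ
        have htc : Tendsto (fun m : ℕ => 1 / ((K m : ℝ) + 1)) atTop (nhds 0) := by
          have h1 : Tendsto (fun m : ℕ => (K m : ℝ) + 1) atTop atTop := by
            apply tendsto_atTop_add_const_right
            apply tendsto_natCast_atTop_atTop.comp
            rw [tendsto_atTop_atTop]
            intro b
            refine ⟨b, fun m hm => ?_⟩
            calc b ≤ m := hm
              _ ≤ K m := by simp only [hKdef]; have := Nat.right_le_pair a0 m; omega
          simpa [one_div, Function.comp_def] using tendsto_inv_atTop_zero.comp h1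
        have hev : ∀ᶠ m in atTop,
            distAvg f id (W (e s)) (W (e t)) δ (ψ m) ≤ L / 2 := by
          filter_upwards [hta.eventually_lt_const (show (0:ℝ) < L / 6 by linarith),
            htb.eventually_lt_const (show (0:ℝ) < L / 6 by linarith),
            htc.eventually_lt_const (show (0:ℝ) < L / 6 by linarith)] with m h1 h2 h3
          have := hcore m
          linarith
        have hfreq : ∃ᶠ n in atTop,
            distAvg f id (W (e s)) (W (e t)) δ n ≤ L / 2 :=
          hψ.frequently hev.frequently
        have := liminf_le_of_frequently_le hfreq hbddB
        rw [← hLdef] at this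
        linarith
      · exact le_liminf_of_le hbddA.isCoboundedUnder_ge
          (Eventually.of_forall fun n => hAvg0 _ _ _ n)
  -- injectivity of the parametrization
  have hinj : Function.Injective fun s : ℕ → Bool => W (e s) := by
    intro s t h
    by_contra hst
    have h2 := (key s t hst).2
    have h1 : liminf (distAvg f id (W (e s)) (W (e t)) δ) atTop = 1 := by
      have heq : ∀ᶠ n in atTop,
          distAvg f id (W (e s)) (W (e t)) δ n = 1 := by
        filter_upwards [eventually_ge_atTop 1] with n hn
        have hn' : ((n:ℕ) : ℝ) ≠ 0 := by
          have : (0:ℝ) < n := by exact_mod_cast hn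
          linarith
        simp only [distAvg, id_eq, h, dist_self]
        rw [Finset.sum_congr rfl fun i _ => if_pos hδ]
        simp [hn']
      rw [liminf_congr heq, liminf_const]
    rw [h2] at h1
    norm_num at h1
  refine ⟨Set.range fun s : ℕ → Bool => W (e s), ?_, ?_⟩
  · intro hD
    apply not_countable_nat_bool
    have hsub : Countable (Set.range fun s : ℕ → Bool => W (e s)) := hD.to_subtype
    exact Function.Injective.countable
      (f := fun s : ℕ → Bool =>
        (⟨W (e s), Set.mem_range_self s⟩ : Set.range fun s : ℕ → Bool => W (e s)))
      (fun s t hh => hinj (congrArg Subtype.val hh))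
  · rintro u ⟨s, rfl⟩ v ⟨t, rfl⟩ huv
    exact key s t fun hh => huv (by rw [hh])
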